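/- Let (f_n)_{n∈ℕ} be a sequence of nonconstant real-rooted polynomials whose degrees are bounded by a fixed integer N, converging coefficient-wise to a nonzero real-rooted polynomial f. Suppose that the limit δ = lim_{n→∞} min{x ∈ ℝ : f_n(x) = 0} exists. Then f has a real root and δ = min{x ∈ ℝ : f(x) = 0}. -/

import Mathlib

open Filter

/-- A real polynomial is real-rooted if all of its complex roots are real. -/
def RealRooted (p : Polynomial ℝ) : Prop :=
  ∀ z : ℂ, Polynomial.aeval z p = 0 → z.im = 0

/-!
Coefficient-wise convergence with bounded degrees gives `f n (x n) → g x₀` whenever `x n → x₀`,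
so the limit `δ` of the smallest roots is a root of `g`. For the minimality of `δ`, note that if
all roots of a real-rooted `p` lie in `[a, ∞)` and `t < ρ < a`, then factor by factor
`|p ρ| ≥ ((a - ρ) / (a - t)) ^ deg p * |p t|`. Eventually every `f n` has its roots to the right of
any `a < δ`; passing to the limit at a root `ρ < a` of `g` and at a point `t < ρ` with `g t ≠ 0`
gives `0 = |g ρ| ≥ c ^ N * |g t| > 0` with `c = (a - ρ) / (a - t)`.
-/

open Polynomial Topology

section Convergence

variable {R ι : Type*} [CommSemiring R] [TopologicalSpace R] [T2Space R] {l : Filter ι} [l.NeBot]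
  {N : ℕ} {f : ι → R[X]} {g : R[X]}

theorem natDegree_le_of_tendsto_coeff (hdeg : ∀ i, (f i).natDegree ≤ N)
    (hconv : ∀ k, Tendsto (fun i => (f i).coeff k) l (𝓝 (g.coeff k))) : g.natDegree ≤ N := by
  refine natDegree_le_iff_coeff_eq_zero.2 fun k hk => tendsto_nhds_unique (hconv k) ?_
  simpa only [coeff_eq_zero_of_natDegree_lt ((hdeg _).trans_lt hk)] using tendsto_const_nhds

theorem tendsto_eval_of_tendsto_coeff [IsTopologicalSemiring R] (hdeg : ∀ i, (f i).natDegree ≤ N)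
    (hconv : ∀ k, Tendsto (fun i => (f i).coeff k) l (𝓝 (g.coeff k)))
    {x : ι → R} {x₀ : R} (hx : Tendsto x l (𝓝 x₀)) :
    Tendsto (fun i => (f i).eval (x i)) l (𝓝 (g.eval x₀)) := by
  have hgN := natDegree_le_of_tendsto_coeff hdeg hconv
  simp only [fun i => eval_eq_sum_range' (Nat.lt_succ_of_le (hdeg i)) (x i),
    eval_eq_sum_range' (Nat.lt_succ_of_le hgN) x₀]
  exact tendsto_finsetSum _ fun k _ => (hconv k).mul (hx.pow k)

end Convergence

theorem RealRooted.splits {p : ℝ[X]} (hp : RealRooted p) : p.Splits := by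
  refine (IsAlgClosed.splits (p.map (algebraMap ℝ ℂ))).of_splits_map _ fun z hz => ?_
  have him : z.im = 0 := hp z (by rw [aeval_def, ← eval_map]; exact isRoot_of_mem_roots hz)
  exact ⟨z.re, Complex.ext rfl him.symm⟩

theorem isLeast_sInf_setOf_eval_eq_zero {p : ℝ[X]} (hp : p ≠ 0)
    (h : {x | p.eval x = 0}.Nonempty) :
    IsLeast {x | p.eval x = 0} (sInf {x | p.eval x = 0}) :=
  have hfin : {x | p.eval x = 0}.Finite := finite_setOfPred_isRoot hp
  ⟨h.csInf_mem hfin, fun _ hx => csInf_le hfin.bddBelow hx⟩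

theorem Polynomial.Splits.pow_mul_abs_eval_le_abs_eval {K : Type*} [Field K] [LinearOrder K]
    [IsStrictOrderedRing K] {p : K[X]} (hp : p.Splits) {a t ρ : K}
    (htρ : t < ρ) (hρa : ρ < a) (hroots : ∀ r ∈ p.roots, a ≤ r) :
    ((a - ρ) / (a - t)) ^ p.natDegree * |p.eval t| ≤ |p.eval ρ| := by
  have hat : 0 < a - t := by linarith
  have habs : ∀ x, |p.eval x| = |p.leadingCoeff| * (p.roots.map fun r => |x - r|).prod := by
    intro x
    rw [hp.eval_eq_prod_roots, abs_mul]
    exact congrArg _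
      ((map_multiset_prod (absHom : K →*₀ K) _).trans (by rw [Multiset.map_map]; rfl))
  rw [habs, habs, mul_left_comm, hp.natDegree_eq_card_roots, ← Multiset.prod_replicate,
    ← Multiset.map_const', ← Multiset.prod_map_mul]
  refine mul_le_mul_of_nonneg_left (Multiset.prod_map_le_prod_map₀ _ _
    (fun r _ => mul_nonneg (div_pos (by linarith) hat).le (abs_nonneg _)) fun r hr => ?_)
    (abs_nonneg _)
  have har := hroots r hr
  rw [abs_of_neg (by linarith : t - r < 0), abs_of_neg (by linarith : ρ - r < 0),
    div_mul_eq_mul_div, div_le_iff₀ hat]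
  nlinarith [mul_nonneg (sub_nonneg.2 har) (sub_nonneg.2 htρ.le)]

theorem le_of_eval_eq_zero_of_tendsto_coeff {N : ℕ} {f : ℕ → ℝ[X]} {g : ℝ[X]}
    (hdeg : ∀ n, (f n).natDegree ≤ N) (hsplits : ∀ n, (f n).Splits) (hg0 : g ≠ 0)
    (hconv : ∀ k, Tendsto (fun n => (f n).coeff k) atTop (𝓝 (g.coeff k))) {a : ℝ}
    (hroots : ∀ᶠ n in atTop, ∀ r ∈ (f n).roots, a ≤ r) {ρ : ℝ} (hρ : g.eval ρ = 0) :
    a ≤ ρ := by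
  by_contra! hρa
  obtain ⟨t, htρ, hgt⟩ : ∃ t, t < ρ ∧ g.eval t ≠ 0 :=
    ((Set.Iio_infinite ρ).sdiff (finite_setOfPred_isRoot hg0)).nonempty
  set c := (a - ρ) / (a - t)
  have hc0 : 0 < c := div_pos (by linarith) (by linarith)
  have hc1 : c ≤ 1 := (div_le_one (by linarith)).2 (by linarith)
  have hbound : ∀ᶠ n in atTop, c ^ N * |(f n).eval t| ≤ |(f n).eval ρ| :=
    hroots.mono fun n hn => calc
      c ^ N * |(f n).eval t| ≤ c ^ (f n).natDegree * |(f n).eval t| :=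
        mul_le_mul_of_nonneg_right (pow_le_pow_of_le_one hc0.le hc1 (hdeg n)) (abs_nonneg _)
      _ ≤ |(f n).eval ρ| := (hsplits n).pow_mul_abs_eval_le_abs_eval htρ hρa hn
  have hlim : c ^ N * |g.eval t| ≤ |g.eval ρ| :=
    le_of_tendsto_of_tendsto
      (((tendsto_eval_of_tendsto_coeff hdeg hconv tendsto_const_nhds).abs).const_mul _)
      (tendsto_eval_of_tendsto_coeff hdeg hconv tendsto_const_nhds).abs hbound
  rw [hρ, abs_zero] at hlim
  exact hlim.not_gt (by positivity)

theorem statement5_general (N : ℕ) (f : ℕ → Polynomial ℝ) (g : Polynomial ℝ) (δ : ℝ)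
    (hdeg : ∀ n, (f n).degree ≤ N)
    (hnc : ∀ n, 0 < (f n).natDegree)
    (hrr : ∀ n, RealRooted (f n))
    (hg0 : g ≠ 0)
    (hconv : ∀ k : ℕ, Tendsto (fun n => (f n).coeff k) atTop (nhds (g.coeff k)))
    (hlim : Tendsto (fun n => sInf {x : ℝ | (f n).eval x = 0}) atTop (nhds δ)) :
    (∃ x : ℝ, g.eval x = 0) ∧ δ = sInf {x : ℝ | g.eval x = 0} := by
  have hdN : ∀ n, (f n).natDegree ≤ N := fun n => natDegree_le_iff_degree_le.2 (hdeg n)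
  have hsplits : ∀ n, (f n).Splits := fun n => (hrr n).splits
  have hleast : ∀ n, IsLeast {x | (f n).eval x = 0} (sInf {x | (f n).eval x = 0}) := fun n =>
    isLeast_sInf_setOf_eval_eq_zero (ne_zero_of_natDegree_gt (hnc n))
      ((hsplits n).exists_eval_eq_zero (natDegree_pos_iff_degree_pos.mp (hnc n)).ne')
  have hgδ : g.eval δ = 0 :=
    tendsto_nhds_unique (tendsto_eval_of_tendsto_coeff hdN hconv hlim)
      (tendsto_const_nhds.congr fun n => (hleast n).1.symm)
  have hmin : ∀ ρ, g.eval ρ = 0 → δ ≤ ρ := fun ρ hρ =>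
    le_of_forall_lt_imp_le_of_dense fun a ha =>
      le_of_eval_eq_zero_of_tendsto_coeff hdN hsplits hg0 hconv
        ((hlim.eventually (eventually_gt_nhds ha)).mono fun n hn r hr =>
          hn.le.trans ((hleast n).2 (isRoot_of_mem_roots hr))) hρ
  exact ⟨⟨δ, hgδ⟩, (IsLeast.csInf_eq (s := {x | g.eval x = 0}) ⟨hgδ, hmin⟩).symm⟩

/-- If a sequence of nonconstant real-rooted polynomials of
bounded degree converges coefficient-wise to a nonzero real-rooted polynomial
`g`, and the smallest real roots converge to `δ`, then `g` has a real root and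
`δ` is the smallest real root of `g`. -/
theorem statement5 (N : ℕ) (f : ℕ → Polynomial ℝ) (g : Polynomial ℝ) (δ : ℝ)
    (hdeg : ∀ n, (f n).degree ≤ N)
    (hnc : ∀ n, 0 < (f n).natDegree)
    (hrr : ∀ n, RealRooted (f n))
    (hg0 : g ≠ 0) (hgrr : RealRooted g)
    (hconv : ∀ k : ℕ, Tendsto (fun n => (f n).coeff k) atTop (nhds (g.coeff k)))
    (hlim : Tendsto (fun n => sInf {x : ℝ | (f n).eval x = 0}) atTop (nhds δ)) :
    (∃ x : ℝ, g.eval x = 0) ∧ δ = sInf {x : ℝ | g.eval x = 0} :=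
  statement5_general N f g δ hdeg hnc hrr hg0 hconv hlim
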